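/- One step of the proximal gradient method with step 1/α, α ≥ ‖D‖², does not increase the Lasso objective: if z⁺ = π_{λ/α}(z − (1/α)Dᵀ(Dz − x)), then (1/2)‖x − Dz⁺‖₂² + λ‖z⁺‖₁ ≤ (1/2)‖x − Dz‖₂² + λ‖z‖₁. -/

import Mathlib

/-!
Write `g = Dᵀ(Dz - x)` for the gradient of `f(y) = ½‖x - Dy‖²` at `z`. Since `f` is quadratic
with Hessian `DᵀD ≤ α`, it lies below its tangent at `z` plus `(α/2)‖y - z‖²`. The step `z⁺` is the
proximal point of `(λ/α)‖·‖₁` at `z - g/α`, so `z - g/α - z⁺` is a subgradient of `(λ/α)‖·‖₁`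
at `z⁺`; testing it against `z` shows that the gain `λ‖z‖₁ - λ‖z⁺‖₁` pays for both the linear
term `⟪g, z⁺ - z⟫` and the quadratic term `α‖z⁺ - z‖²` of the upper bound.
-/

/-- Coordinatewise soft-thresholding with threshold `t`. -/
noncomputable def softVec {q : ℕ} (t : ℝ) (v : EuclideanSpace ℝ (Fin q)) :
    EuclideanSpace ℝ (Fin q) := WithLp.toLp 2 (fun i => Real.sign (v i) * max 0 (|v i| - t))

open RealInnerProductSpace

noncomputable def softThreshold (t v : ℝ) : ℝ := Real.sign v * max 0 (|v| - t)

lemma softVec_apply {q : ℕ} (t : ℝ) (v : EuclideanSpace ℝ (Fin q)) (i : Fin q) :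
    softVec t v i = softThreshold t (v i) := rfl

lemma softThreshold_variational_ineq {t : ℝ} (ht : 0 ≤ t) (v u : ℝ) :
    t * |softThreshold t v| + (v - softThreshold t v) * (u - softThreshold t v) ≤ t * |u| := by
  unfold softThreshold
  rcases lt_or_ge t |v| with hvt | hvt
  · rw [max_eq_right (by linarith)]
    rcases lt_trichotomy v 0 with hv | hv | hv
    · rw [abs_of_neg hv] at hvt ⊢
      rw [show Real.sign v * (-v - t) = v + t by rw [Real.sign_of_neg hv]; ring,
        abs_of_neg (by linarith)]
      nlinarith [neg_abs_le u]
    · simp only [hv, abs_zero] at hvt; linarith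
    · rw [abs_of_pos hv] at hvt ⊢
      rw [show Real.sign v * (v - t) = v - t by rw [Real.sign_of_pos hv]; ring,
        abs_of_pos (by linarith)]
      nlinarith [le_abs_self u]
  · rw [max_eq_left (by linarith), mul_zero, abs_zero, mul_zero, zero_add, sub_zero, sub_zero]
    calc v * u ≤ |v| * |u| := by rw [← abs_mul]; exact le_abs_self _
      _ ≤ t * |u| := by gcongr

lemma softVec_variational_ineq {q : ℕ} {t : ℝ} (ht : 0 ≤ t) (v u : EuclideanSpace ℝ (Fin q)) :
    t * ∑ i, |softVec t v i| + ⟪v - softVec t v, u - softVec t v⟫ ≤ t * ∑ i, |u i| := by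
  simp only [PiLp.inner_apply, PiLp.sub_apply, RCLike.inner_apply, conj_trivial, Finset.mul_sum,
    ← Finset.sum_add_distrib, softVec_apply]
  gcongr with i
  rw [mul_comm (u i - _)]
  exact softThreshold_variational_ineq ht (v i) (u i)

lemma softVec_proxGradStep_ineq {q : ℕ} {lam α : ℝ} (hlam : 0 ≤ lam) (hα : 0 < α)
    {g z zp : EuclideanSpace ℝ (Fin q)} (hzp : zp = softVec (lam / α) (z - (1 / α) • g)) :
    lam * ∑ i, |zp i| + ⟪g, zp - z⟫ + α * ‖zp - z‖ ^ 2 ≤ lam * ∑ i, |z i| := by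
  have h := softVec_variational_ineq (div_nonneg hlam hα.le) (z - (1 / α) • g) z
  have hinner : ⟪z - (1 / α) • g - zp, z - zp⟫ = ‖zp - z‖ ^ 2 + (1 / α) * ⟪g, zp - z⟫ := by
    rw [show z - (1 / α) • g - zp = (z - zp) - (1 / α) • g by abel, inner_sub_left,
      real_inner_smul_left, real_inner_self_eq_norm_sq, norm_sub_rev, ← neg_sub zp z,
      inner_neg_right]
    ring
  rw [← hzp, hinner] at h
  have := mul_le_mul_of_nonneg_left h hα.le
  field_simp at this
  linarith

section LeastSquares

variable {E F : Type*} [NormedAddCommGroup E] [InnerProductSpace ℝ E] [CompleteSpace E]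
  [NormedAddCommGroup F] [InnerProductSpace ℝ F] [CompleteSpace F]

lemma norm_sub_apply_sq_le (D : E →L[ℝ] F) (x : F) (y z : E) :
    ‖x - D y‖ ^ 2 ≤ ‖x - D z‖ ^ 2 + 2 * ⟪D.adjoint (D z - x), y - z⟫ + ‖D‖ ^ 2 * ‖y - z‖ ^ 2 := by
  have hexpand : x - D y = (x - D z) - D (y - z) := by rw [map_sub]; abel
  have hD : ‖D (y - z)‖ ^ 2 ≤ ‖D‖ ^ 2 * ‖y - z‖ ^ 2 := by
    rw [← mul_pow]; gcongr; exact D.le_opNorm _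
  rw [hexpand, norm_sub_sq_real, ContinuousLinearMap.adjoint_inner_left, ← neg_sub (D z) x,
    inner_neg_left]
  linarith

end LeastSquares

/-- One proximal-gradient step with step `1/α`, `α ≥ ‖D‖²`, does not increase the
Lasso objective. -/
theorem stmt_10 {m q : ℕ}
    (D : EuclideanSpace ℝ (Fin q) →L[ℝ] EuclideanSpace ℝ (Fin m))
    (x : EuclideanSpace ℝ (Fin m)) (lam α : ℝ)
    (hlam : 0 < lam) (hα0 : 0 < α) (hα : ‖D‖^2 ≤ α)
    (z zp : EuclideanSpace ℝ (Fin q))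
    (hstep : zp = softVec (lam/α) (z - (1/α) • (ContinuousLinearMap.adjoint D) (D z - x))) :
    (1/2) * ‖x - D zp‖^2 + lam * ∑ i, |zp i| ≤ (1/2) * ‖x - D z‖^2 + lam * ∑ i, |z i| := by
  have hstep_ineq := softVec_proxGradStep_ineq hlam.le hα0 hstep
  have hdescent := norm_sub_apply_sq_le D x zp z
  have hquad : ‖D‖ ^ 2 * ‖zp - z‖ ^ 2 ≤ α * ‖zp - z‖ ^ 2 := by gcongr
  linarith [mul_nonneg hα0.le (sq_nonneg ‖zp - z‖)]
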